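/- Let S be a set of unit vectors in a finite-dimensional complex Hilbert space and ψ a unit vector such that the rank-one projector |ψ⟩⟨ψ| equals (1/N) Σᵢ Vᵢ where each Vᵢ is a unitary with Vᵢ S ⊆ S (the unitaries preserve S). Define ξ(ψ) = inf ‖a‖₁² over decompositions ψ = Σⱼ aⱼ sⱼ with sⱼ ∈ S, and F(ψ) = sup_{s ∈ S} |⟨ψ|s⟩|². If F(ψ) > 0, then ξ(ψ) = 1/F(ψ). -/

import Mathlib

/-!
Averaging the identity |ψ⟩⟨ψ| = (1/N) Σᵢ Vᵢ over a free state ω gives ⟪ψ, ω⟫ ψ = (1/N) Σᵢ Vᵢ ω,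
a decomposition of ψ into the free states Vᵢ ω with ℓ¹-norm 1/|⟪ψ, ω⟫|; choosing ω of near-maximal
overlap gives ξ(ψ) ≤ 1/F(ψ). Conversely, pairing any decomposition ψ = Σⱼ aⱼ sⱼ with ψ gives
1 = |Σⱼ aⱼ ⟪ψ, sⱼ⟫| ≤ ‖a‖₁ √F(ψ), so ξ(ψ) ≥ 1/F(ψ).
-/

open scoped InnerProductSpace
open Finset

namespace Real

lemma bddAbove_of_sSup_pos {Y : Set ℝ} (hY : 0 < sSup Y) : BddAbove Y := by
  by_contra h
  rw [sSup_of_not_bddAbove h] at hY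
  exact hY.false

lemma sInf_eq_one_div_sSup {X Y : Set ℝ} (hY : 0 < sSup Y)
    (hlow : ∀ x ∈ X, 1 / sSup Y ≤ x) (hmem : ∀ y ∈ Y, 0 < y → 1 / y ∈ X) :
    sInf X = 1 / sSup Y := by
  have hYne : Y.Nonempty := Set.nonempty_iff_ne_empty.2 fun h => by simp [h] at hY
  obtain ⟨y₀, hy₀, hy₀pos⟩ := exists_lt_of_lt_csSup hYne hY
  have hge : 1 / sSup Y ≤ sInf X := le_csInf ⟨_, hmem y₀ hy₀ hy₀pos⟩ hlow
  have hXpos : 0 < sInf X := (one_div_pos.2 hY).trans_le hge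
  have hsSup_le : sSup Y ≤ 1 / sInf X := by
    refine csSup_le hYne fun y hy => ?_
    rcases le_or_gt y 0 with hy0 | hy0
    · exact hy0.trans (one_div_pos.2 hXpos).le
    · exact (le_one_div hXpos hy0).1 (csInf_le ⟨_, hlow⟩ (hmem y hy hy0))
  exact le_antisymm ((le_one_div hXpos hY).2 hsSup_le) hge

end Real

section

variable {𝕜 E : Type*} [RCLike 𝕜] [NormedAddCommGroup E] [InnerProductSpace 𝕜 E]

variable (𝕜) in
/-- The extent `ξ(ψ)` is the infimum of this set. -/
def extentValues (S : Set E) (ψ : E) : Set ℝ :=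
  {r | ∃ (k : ℕ) (a : Fin k → 𝕜) (s : Fin k → E),
    (∀ j, s j ∈ S) ∧ ψ = ∑ j, a j • s j ∧ r = (∑ j, ‖a j‖) ^ 2}

variable (𝕜) in
/-- The fidelity `F(ψ)` is the supremum of this set. -/
def overlapValues (S : Set E) (ψ : E) : Set ℝ :=
  {r | ∃ s ∈ S, r = ‖(⟪ψ, s⟫_𝕜 : 𝕜)‖ ^ 2}

lemma norm_inner_sum_smul_le {ι : Type*} (t : Finset ι) (x : E) (a : ι → 𝕜) (s : ι → E)
    {C : ℝ} (hC : ∀ j ∈ t, ‖⟪x, s j⟫_𝕜‖ ≤ C) :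
    ‖⟪x, ∑ j ∈ t, a j • s j⟫_𝕜‖ ≤ (∑ j ∈ t, ‖a j‖) * C :=
  calc ‖⟪x, ∑ j ∈ t, a j • s j⟫_𝕜‖ = ‖∑ j ∈ t, a j * ⟪x, s j⟫_𝕜‖ := by
        simp only [inner_sum, inner_smul_right]
    _ ≤ ∑ j ∈ t, ‖a j‖ * ‖⟪x, s j⟫_𝕜‖ := by
        simpa only [norm_mul] using norm_sum_le t fun j => a j * ⟪x, s j⟫_𝕜
    _ ≤ ∑ j ∈ t, ‖a j‖ * C :=
        sum_le_sum fun j hj => mul_le_mul_of_nonneg_left (hC j hj) (norm_nonneg _)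
    _ = (∑ j ∈ t, ‖a j‖) * C := (sum_mul ..).symm

lemma one_le_sq_sum_norm_mul {ι : Type*} (t : Finset ι) {ψ : E} (hψ : ‖ψ‖ = 1)
    (a : ι → 𝕜) (s : ι → E) (hdec : ψ = ∑ j ∈ t, a j • s j) {F : ℝ} (hF : 0 ≤ F)
    (hs : ∀ j ∈ t, ‖⟪ψ, s j⟫_𝕜‖ ^ 2 ≤ F) :
    1 ≤ (∑ j ∈ t, ‖a j‖) ^ 2 * F := by
  have hone : 1 ≤ (∑ j ∈ t, ‖a j‖) * √F := by
    have h := norm_inner_sum_smul_le t ψ a s fun j hj =>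
      Real.le_sqrt_of_sq_le (hs j hj)
    rw [← hdec, inner_self_eq_norm_sq_to_K, hψ] at h
    simpa using h
  calc (1 : ℝ) ≤ ((∑ j ∈ t, ‖a j‖) * √F) ^ 2 := one_le_pow₀ hone
    _ = (∑ j ∈ t, ‖a j‖) ^ 2 * F := by rw [mul_pow, Real.sq_sqrt hF]

lemma eq_sum_smul_of_smul_eq_average {N : ℕ} {ψ : E} {c : 𝕜} (hc : c ≠ 0)
    (v : Fin N → E) (h : c • ψ = (N : 𝕜)⁻¹ • ∑ i, v i) :
    ψ = ∑ i, ((N : 𝕜) * c)⁻¹ • v i := by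
  rw [← smul_sum, mul_inv_rev, mul_smul, ← h, inv_smul_smul₀ hc]

lemma sq_sum_norm_const_inv {N : ℕ} (hN : 0 < N) (c : 𝕜) :
    (∑ _i : Fin N, ‖((N : 𝕜) * c)⁻¹‖) ^ 2 = 1 / ‖c‖ ^ 2 := by
  have hN' : (N : ℝ) ≠ 0 := Nat.cast_ne_zero.2 hN.ne'
  rw [sum_const, card_univ, Fintype.card_fin, nsmul_eq_mul, norm_inv, norm_mul,
    RCLike.norm_natCast, mul_inv, ← mul_assoc, mul_inv_cancel₀ hN', one_mul, inv_pow, one_div]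

lemma one_div_mem_extentValues {S : Set E} {ψ : E} {N : ℕ} (hN : 0 < N)
    (V : Fin N → E → E) (hVS : ∀ i, ∀ s ∈ S, V i s ∈ S)
    (hproj : ∀ φ : E, ⟪ψ, φ⟫_𝕜 • ψ = (N : 𝕜)⁻¹ • ∑ i, V i φ)
    {ω : E} (hω : ω ∈ S) (hc : ⟪ψ, ω⟫_𝕜 ≠ 0) :
    1 / ‖⟪ψ, ω⟫_𝕜‖ ^ 2 ∈ extentValues 𝕜 S ψ :=
  ⟨N, fun _ => ((N : 𝕜) * ⟪ψ, ω⟫_𝕜)⁻¹, fun i => V i ω, fun i => hVS i ω hω,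
    eq_sum_smul_of_smul_eq_average hc _ (hproj ω), (sq_sum_norm_const_inv hN _).symm⟩

end

theorem stmt11_general {H : Type*} [NormedAddCommGroup H] [InnerProductSpace ℂ H]
    (S : Set H)
    (ψ : H) (hψ : ‖ψ‖ = 1)
    (N : ℕ) (hN : 0 < N) (V : Fin N → (H ≃ₗᵢ[ℂ] H))
    (hVS : ∀ i, ∀ s ∈ S, V i s ∈ S)
    (hproj : ∀ φ : H, (⟪ψ, φ⟫_ℂ) • ψ = (N : ℂ)⁻¹ • ∑ i : Fin N, V i φ)
    (ξset : Set ℝ)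
    (hξ : ξset = {r | ∃ (k : ℕ) (a : Fin k → ℂ) (s : Fin k → H),
      (∀ j, s j ∈ S) ∧ ψ = ∑ j, a j • s j ∧ r = (∑ j, ‖a j‖) ^ 2})
    (F : ℝ) (hF : F = sSup {r | ∃ s ∈ S, r = ‖(⟪ψ, s⟫_ℂ : ℂ)‖ ^ 2})
    (hFpos : 0 < F) :
    sInf ξset = 1 / F := by
  change ξset = extentValues ℂ S ψ at hξ
  change F = sSup (overlapValues ℂ S ψ) at hF
  subst hξ hF
  have hbdd := Real.bddAbove_of_sSup_pos hFpos
  refine Real.sInf_eq_one_div_sSup hFpos ?_ ?_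
  · rintro _ ⟨k, a, s, hs, hdec, rfl⟩
    rw [div_le_iff₀ hFpos]
    exact one_le_sq_sum_norm_mul univ hψ a s hdec hFpos.le fun j _ =>
      le_csSup hbdd ⟨s j, hs j, rfl⟩
  · rintro _ ⟨ω, hω, rfl⟩ hpos
    exact one_div_mem_extentValues hN (fun i => V i) hVS hproj hω
      fun h => by simp [h] at hpos

/-- if |ψ⟩⟨ψ| = (1/N) Σᵢ Vᵢ with each Vᵢ a unitary preserving the set S of
    free states, then ξ(ψ) = 1/F(ψ) whenever F(ψ) > 0. -/
theorem stmt11 {H : Type*} [NormedAddCommGroup H] [InnerProductSpace ℂ H]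
    [FiniteDimensional ℂ H]
    (S : Set H) (hS : ∀ s ∈ S, ‖s‖ = 1)
    (ψ : H) (hψ : ‖ψ‖ = 1)
    (N : ℕ) (hN : 0 < N) (V : Fin N → (H ≃ₗᵢ[ℂ] H))
    (hVS : ∀ i, ∀ s ∈ S, V i s ∈ S)
    (hproj : ∀ φ : H, (⟪ψ, φ⟫_ℂ) • ψ = (N : ℂ)⁻¹ • ∑ i : Fin N, V i φ)
    (ξset : Set ℝ)
    (hξ : ξset = {r | ∃ (k : ℕ) (a : Fin k → ℂ) (s : Fin k → H),
      (∀ j, s j ∈ S) ∧ ψ = ∑ j, a j • s j ∧ r = (∑ j, ‖a j‖) ^ 2})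
    (F : ℝ) (hF : F = sSup {r | ∃ s ∈ S, r = ‖(⟪ψ, s⟫_ℂ : ℂ)‖ ^ 2})
    (hFpos : 0 < F) :
    sInf ξset = 1 / F :=
  stmt11_general S ψ hψ N hN V hVS hproj ξset hξ F hF hFpos
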